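/- arXiv:2306.09964 — 4 statements merged into one kernel-verified Lean document; each statement's English description precedes it below -/
import Mathlib

section
/- Fix t ∈ (0,1), BCEs p and q, player i, and action a_i in the support of p. Then every best response to the conditional belief of (t·p + (1−t)·q) given a_i is also a best response to the conditional belief of p given a_i; that is, BR((tp+(1−t)q)_{a_i}) ⊆ BR(p_{a_i}). -/
open Finset

variable {I : Type} [Fintype I] [DecidableEq I]
  {A : I → Type} [∀ i, Fintype (A i)] [∀ i, DecidableEq (A i)]
  {Θ : Type} [Fintype Θ]

/-- The marginal probability that player `i` plays `ai` under outcome `p`. -/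
noncomputable def marg (p : ((∀ j, A j) × Θ) → ℝ) (i : I) (ai : A i) : ℝ :=
  ∑ x : (∀ j, A j) × Θ, if x.1 i = ai then p x else 0

/-- The conditional belief of player `i` given recommendation `ai`, represented
as a function on full profile-state pairs that ignores the `i`-th coordinate
(it is overridden by `ai`).  It is the zero function if `marg p i ai = 0`. -/
noncomputable def condBelief (p : ((∀ j, A j) × Θ) → ℝ) (i : I) (ai : A i) :
    ((∀ j, A j) × Θ) → ℝ :=
  fun x => p (Function.update x.1 i ai, x.2) / marg p i ai

/-- Expected utility for player `i` of playing `ci` against belief `μ`. -/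
noncomputable def dev (u : ((∀ j, A j) × Θ) → ℝ) (i : I) (ci : A i)
    (μ : ((∀ j, A j) × Θ) → ℝ) : ℝ :=
  ∑ x : (∀ j, A j) × Θ, u (Function.update x.1 i ci, x.2) * μ x

/-- Best responses of player `i` (with utility `u`) to belief `μ`. -/
noncomputable def BRset (u : ((∀ j, A j) × Θ) → ℝ) (i : I)
    (μ : ((∀ j, A j) × Θ) → ℝ) : Set (A i) :=
  {ci | ∀ di : A i, dev u i di μ ≤ dev u i ci μ}

/-- The obedience constraint defining a Bayes correlated equilibrium. -/
def Obedient (u : ∀ i : I, ((∀ j, A j) × Θ) → ℝ) (p : ((∀ j, A j) × Θ) → ℝ) : Prop :=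
  ∀ i : I, ∀ ai bi : A i,
    0 ≤ ∑ x : (∀ j, A j) × Θ,
      (if x.1 i = ai then (u i x - u i (Function.update x.1 i bi, x.2)) * p x else 0)

/-- The separation constraint: recommendations inducing distinct beliefs have
disjoint best-response sets. -/
def Separated (u : ∀ i : I, ((∀ j, A j) × Θ) → ℝ) (p : ((∀ j, A j) × Θ) → ℝ) : Prop :=
  ∀ i : I, ∀ ai bi : A i, 0 < marg p i ai → 0 < marg p i bi →
    condBelief p i ai ≠ condBelief p i bi →
    BRset (u i) i (condBelief p i ai) ∩ BRset (u i) i (condBelief p i bi) = ∅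

/-- `p` is an outcome with `Θ`-marginal `π`. -/
def IsOutcome (π : Θ → ℝ) (p : ((∀ j, A j) × Θ) → ℝ) : Prop :=
  (∀ x, 0 ≤ p x) ∧ ∀ θ, (∑ a : ∀ j, A j, p (a, θ)) = π θ

lemma sum_update_eq (i : I) (ai : A i) (g : (∀ j, A j) → ℝ) :
    ∑ a : ∀ j, A j, g (Function.update a i ai)
      = (Fintype.card (A i) : ℝ) * ∑ a : ∀ j, A j, if a i = ai then g a else 0 := by
  classical
  have key : ∀ (f : (∀ j, A j) → ℝ), ∑ a : ∀ j, A j, f a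
      = ∑ z : A i × (∀ j : {j // j ≠ i}, A j), f ((Equiv.piSplitAt i A).symm z) :=
    fun f => (Fintype.sum_equiv (Equiv.piSplitAt i A).symm (fun z => f ((Equiv.piSplitAt i A).symm z)) f (fun z => rfl)).symm
  have hupd : ∀ (a : ∀ j, A j), Function.update a i ai
      = (Equiv.piSplitAt i A).symm (ai, ((Equiv.piSplitAt i A) a).2) := by
    intro a
    funext j
    by_cases h : j = i
    · subst h; simp
    · simp [h, Function.update_of_ne h]
  rw [key (fun a => g (Function.update a i ai)), key (fun a => if a i = ai then g a else 0)]
  rw [Fintype.sum_prod_type, Fintype.sum_prod_type]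
  have h2 : ∀ (c : A i) (r : ∀ j : {j // j ≠ i}, A j),
      g (Function.update ((Equiv.piSplitAt i A).symm (c, r)) i ai)
        = g ((Equiv.piSplitAt i A).symm (ai, r)) := by
    intro c r
    rw [hupd]
    congr 2
    simp
  have h3 : ∀ (c : A i) (r : ∀ j : {j // j ≠ i}, A j),
      ((Equiv.piSplitAt i A).symm (c, r)) i = c := by intro c r; simp
  calc ∑ c : A i, ∑ r : (∀ j : {j // j ≠ i}, A j),
        g (Function.update ((Equiv.piSplitAt i A).symm (c, r)) i ai)
      = ∑ c : A i, ∑ r : (∀ j : {j // j ≠ i}, A j), g ((Equiv.piSplitAt i A).symm (ai, r)) := by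
        refine Finset.sum_congr rfl fun c _ => Finset.sum_congr rfl fun r _ => h2 c r
    _ = (Fintype.card (A i) : ℝ) * ∑ r : (∀ j : {j // j ≠ i}, A j), g ((Equiv.piSplitAt i A).symm (ai, r)) := by
        rw [Finset.sum_const, card_univ, nsmul_eq_mul]
    _ = (Fintype.card (A i) : ℝ) * ∑ c : A i, ∑ r : (∀ j : {j // j ≠ i}, A j),
        (if ((Equiv.piSplitAt i A).symm (c, r)) i = ai then g ((Equiv.piSplitAt i A).symm (c, r)) else 0) := by
        congr 1
        have : ∀ c : A i, (∑ r : (∀ j : {j // j ≠ i}, A j),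
            (if ((Equiv.piSplitAt i A).symm (c, r)) i = ai then g ((Equiv.piSplitAt i A).symm (c, r)) else 0))
            = if c = ai then ∑ r : (∀ j : {j // j ≠ i}, A j), g ((Equiv.piSplitAt i A).symm (c, r)) else 0 := by
          intro c
          simp only [h3]
          split <;> simp
        rw [Finset.sum_congr rfl fun c _ => this c, Finset.sum_ite_eq' univ ai]
        simp

lemma sum_update_pair (i : I) (ai : A i) (F : ((∀ j, A j) × Θ) → ℝ) :
    ∑ x : (∀ j, A j) × Θ, F (Function.update x.1 i ai, x.2)
      = (Fintype.card (A i) : ℝ) * ∑ x : (∀ j, A j) × Θ, if x.1 i = ai then F x else 0 := by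
  rw [Fintype.sum_prod_type, Fintype.sum_prod_type, Finset.sum_comm]
  have h1 : ∀ θ : Θ, ∑ a : ∀ j, A j, F (Function.update a i ai, θ)
      = (Fintype.card (A i) : ℝ) * ∑ a : ∀ j, A j, if a i = ai then F (a, θ) else 0 :=
    fun θ => sum_update_eq i ai (fun a => F (a, θ))
  rw [Finset.sum_congr rfl fun θ _ => h1 θ, ← Finset.mul_sum, Finset.sum_comm]

lemma marg_nonneg (p : ((∀ j, A j) × Θ) → ℝ) (hnn : ∀ x, 0 ≤ p x) (i : I) (ai : A i) :
    0 ≤ marg p i ai := by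
  refine Finset.sum_nonneg fun x _ => ?_
  split
  · exact hnn x
  · exact le_rfl

lemma dev_condBelief_eq (p : ((∀ j, A j) × Θ) → ℝ) (u : ((∀ j, A j) × Θ) → ℝ)
    (i : I) (ai ci : A i) :
    dev u i ci (condBelief p i ai)
      = (Fintype.card (A i) : ℝ)
        * (∑ x : (∀ j, A j) × Θ, if x.1 i = ai then u (Function.update x.1 i ci, x.2) * p x else 0)
        / marg p i ai := by
  unfold dev condBelief
  have h1 : ∀ x : (∀ j, A j) × Θ,
      u (Function.update x.1 i ci, x.2) * (p (Function.update x.1 i ai, x.2) / marg p i ai)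
      = (fun y : (∀ j, A j) × Θ => u (Function.update y.1 i ci, y.2) * p y / marg p i ai)
          (Function.update x.1 i ai, x.2) := by
    intro x
    simp only [Function.update_idem]
    ring
  rw [Finset.sum_congr rfl fun x _ => h1 x,
    sum_update_pair i ai (fun y => u (Function.update y.1 i ci, y.2) * p y / marg p i ai),
    mul_div_assoc, Finset.sum_div]
  congr 1
  refine Finset.sum_congr rfl fun x _ => ?_
  split <;> simp

lemma ai_best (u : ∀ i : I, ((∀ j, A j) × Θ) → ℝ) (p : ((∀ j, A j) × Θ) → ℝ)
    (hnn : ∀ x, 0 ≤ p x) (hp : Obedient u p) (i : I) (ai bi : A i) :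
    dev (u i) i bi (condBelief p i ai) ≤ dev (u i) i ai (condBelief p i ai) := by
  rw [dev_condBelief_eq, dev_condBelief_eq]
  rcases eq_or_lt_of_le (marg_nonneg p hnn i ai) with hm | hm
  · rw [← hm, div_zero, div_zero]
  · have hob := hp i ai bi
    have key : ∑ x : (∀ j, A j) × Θ,
        (if x.1 i = ai then (u i x - u i (Function.update x.1 i bi, x.2)) * p x else 0)
      = (∑ x : (∀ j, A j) × Θ, if x.1 i = ai then u i (Function.update x.1 i ai, x.2) * p x else 0)
        - ∑ x : (∀ j, A j) × Θ, if x.1 i = ai then u i (Function.update x.1 i bi, x.2) * p x else 0 := by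
      rw [← Finset.sum_sub_distrib]
      refine Finset.sum_congr rfl fun x _ => ?_
      by_cases h : x.1 i = ai
      · simp only [h, if_pos]
        have hx : Function.update x.1 i ai = x.1 := by rw [← h]; exact Function.update_eq_self i x.1
        rw [hx]; ring
      · simp [h]
    rw [key] at hob
    have hcard : (0:ℝ) ≤ (Fintype.card (A i) : ℝ) := Nat.cast_nonneg _
    exact div_le_div_of_nonneg_right (by nlinarith) hm.le

lemma upd_zero_of_marg_zero (q : ((∀ j, A j) × Θ) → ℝ) (hnn : ∀ x, 0 ≤ q x) (i : I) (ai : A i)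
    (hm : marg q i ai = 0) (x : (∀ j, A j) × Θ) :
    q (Function.update x.1 i ai, x.2) = 0 := by
  have h0 : ∀ y ∈ (univ : Finset ((∀ j, A j) × Θ)),
      (0:ℝ) ≤ if y.1 i = ai then q y else 0 := by
    intro y _
    split
    · exact hnn y
    · exact le_rfl
  have := (Finset.sum_eq_zero_iff_of_nonneg h0).mp hm
    (Function.update x.1 i ai, x.2) (mem_univ _)
  simpa using this

lemma upd_eq_marg_mul (q : ((∀ j, A j) × Θ) → ℝ) (hnn : ∀ x, 0 ≤ q x) (i : I) (ai : A i)
    (x : (∀ j, A j) × Θ) :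
    q (Function.update x.1 i ai, x.2) = marg q i ai * condBelief q i ai x := by
  unfold condBelief
  rcases eq_or_lt_of_le (marg_nonneg q hnn i ai) with h | h
  · rw [← h, zero_mul]
    exact upd_zero_of_marg_zero q hnn i ai h.symm x
  · field_simp

/-- for `t ∈ (0,1)`, BCEs `p, q`, and `a_i` in the support of `p`,
every best response to the conditional belief of `t•p + (1−t)•q` given `a_i`
is a best response to the conditional belief of `p` given `a_i`. -/
theorem stmt4 {I : Type} [Fintype I] [DecidableEq I]
    {A : I → Type} [∀ i, Fintype (A i)] [∀ i, DecidableEq (A i)]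
    {Θ : Type} [Fintype Θ]
    (π : Θ → ℝ) (hπpos : ∀ θ, 0 < π θ) (hπ1 : ∑ θ, π θ = 1)
    (u : ∀ i : I, ((∀ j, A j) × Θ) → ℝ)
    (p q : ((∀ j, A j) × Θ) → ℝ)
    (hpout : IsOutcome π p) (hqout : IsOutcome π q)
    (hp : Obedient u p) (hq : Obedient u q)
    (t : ℝ) (ht : t ∈ Set.Ioo (0 : ℝ) 1)
    (i : I) (ai : A i) (hai : 0 < marg p i ai) :
    BRset (u i) i (condBelief (fun x => t * p x + (1 - t) * q x) i ai)
      ⊆ BRset (u i) i (condBelief p i ai) := by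
  obtain ⟨ht0, ht1⟩ := ht
  obtain ⟨hpnn, -⟩ := hpout
  obtain ⟨hqnn, -⟩ := hqout
  have hmq : 0 ≤ marg q i ai := marg_nonneg q hqnn i ai
  have hmr : marg (fun x => t * p x + (1 - t) * q x) i ai
      = t * marg p i ai + (1 - t) * marg q i ai := by
    unfold marg
    rw [Finset.mul_sum, Finset.mul_sum, ← Finset.sum_add_distrib]
    refine Finset.sum_congr rfl fun x _ => ?_
    split <;> simp
  have hmrpos : 0 < marg (fun x => t * p x + (1 - t) * q x) i ai := by
    rw [hmr]; nlinarith
  have hdecomp : ∀ x, condBelief (fun x => t * p x + (1 - t) * q x) i ai x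
      = (t * marg p i ai / marg (fun x => t * p x + (1 - t) * q x) i ai) * condBelief p i ai x
        + ((1 - t) * marg q i ai / marg (fun x => t * p x + (1 - t) * q x) i ai)
          * condBelief q i ai x := by
    intro x
    show (t * p (Function.update x.1 i ai, x.2) + (1 - t) * q (Function.update x.1 i ai, x.2))
        / marg (fun x => t * p x + (1 - t) * q x) i ai = _
    rw [upd_eq_marg_mul p hpnn i ai x, upd_eq_marg_mul q hqnn i ai x]
    ring
  have hdev : ∀ ci : A i, dev (u i) i ci (condBelief (fun x => t * p x + (1 - t) * q x) i ai)
      = (t * marg p i ai / marg (fun x => t * p x + (1 - t) * q x) i ai)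
          * dev (u i) i ci (condBelief p i ai)
        + ((1 - t) * marg q i ai / marg (fun x => t * p x + (1 - t) * q x) i ai)
          * dev (u i) i ci (condBelief q i ai) := by
    intro ci
    unfold dev
    rw [Finset.mul_sum, Finset.mul_sum, ← Finset.sum_add_distrib]
    refine Finset.sum_congr rfl fun x _ => ?_
    rw [hdecomp x]
    ring
  intro ci hci
  have hciai := hci ai
  have hcip : dev (u i) i ci (condBelief p i ai) ≤ dev (u i) i ai (condBelief p i ai) :=
    ai_best u p hpnn hp i ai ci
  have hciq : dev (u i) i ci (condBelief q i ai) ≤ dev (u i) i ai (condBelief q i ai) :=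
    ai_best u q hqnn hq i ai ci
  rw [hdev ai, hdev ci] at hciai
  have hα : 0 < t * marg p i ai / marg (fun x => t * p x + (1 - t) * q x) i ai :=
    div_pos (mul_pos ht0 hai) hmrpos
  have hβ : 0 ≤ (1 - t) * marg q i ai / marg (fun x => t * p x + (1 - t) * q x) i ai :=
    div_nonneg (mul_nonneg (by linarith) hmq) hmrpos.le
  have heq : dev (u i) i ai (condBelief p i ai) = dev (u i) i ci (condBelief p i ai) := by
    nlinarith
  intro di
  calc dev (u i) i di (condBelief p i ai)
      ≤ dev (u i) i ai (condBelief p i ai) := ai_best u p hpnn hp i ai di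
    _ = dev (u i) i ci (condBelief p i ai) := heq
end

section
/- For a single decision maker with finite action set A_i, finite state space Ω, and utility w_i : A_i × Ω → ℝ, the following are equivalent: (i) there is no belief μ ∈ Δ(Ω) for which a given action a_i is the unique best response; (ii) there is a mixed action α_i ∈ Δ(A_i \ {a_i}) that weakly dominates a_i, i.e., Σ_{b_i} w_i(b_i,ω)α_i(b_i) ≥ w_i(a_i,ω) for all ω ∈ Ω. -/
/-!
Let `G` be the matrix of payoff gains `w b ω - w a ω` of the actions `b ≠ a`. By von Neumann's
minimax theorem the bilinear game `(μ, β) ↦ β ⬝ᵥ G *ᵥ μ` on the product of simplices has a saddle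
point `(μ, β)`. If its value is negative, every pure `b ≠ a` loses against `μ`, so `a` is the
unique best response to `μ`; otherwise every pure state gives `β` a nonnegative gain, so `β`
weakly dominates `a`. Both cannot happen, since then `β ⬝ᵥ G *ᵥ μ` would be negative and
nonnegative at once.
-/

open Finset Matrix

namespace Matrix

variable {ι κ : Type*} [Fintype ι] [Fintype κ]

theorem dotProduct_neg_of_mem_stdSimplex {α v : ι → ℝ} (hα : α ∈ stdSimplex ℝ ι)
    (hv : ∀ i, v i < 0) : α ⬝ᵥ v < 0 := by
  obtain ⟨i, -, hi⟩ := exists_ne_zero_of_sum_ne_zero (hα.2.symm ▸ one_ne_zero)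
  have hpos : 0 < ∑ j, α j * -v j :=
    sum_pos' (fun j _ => mul_nonneg (hα.1 j) (neg_nonneg.2 (hv j).le))
      ⟨i, mem_univ i, mul_pos ((hα.1 i).lt_of_ne' hi) (neg_pos.2 (hv i))⟩
  simp only [mul_neg, sum_neg_distrib, neg_pos] at hpos
  exact hpos

theorem not_exists_stdSimplex_mulVec_neg_and_vecMul_nonneg (M : Matrix ι κ ℝ) :
    ¬ ((∃ μ ∈ stdSimplex ℝ κ, ∀ i, (M *ᵥ μ) i < 0) ∧
      ∃ α ∈ stdSimplex ℝ ι, ∀ j, 0 ≤ (α ᵥ* M) j) := by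
  rintro ⟨⟨μ, hμ, hneg⟩, α, hα, hnonneg⟩
  have hlt : α ⬝ᵥ M *ᵥ μ < 0 := dotProduct_neg_of_mem_stdSimplex hα hneg
  have hge : 0 ≤ α ⬝ᵥ M *ᵥ μ := dotProduct_mulVec α M μ ▸ dotProduct_nonneg_of_nonneg hnonneg hμ.1
  exact hlt.not_ge hge

theorem exists_isSaddlePointOn_stdSimplex [Nonempty ι] [Nonempty κ] (M : Matrix ι κ ℝ) :
    ∃ μ ∈ stdSimplex ℝ κ, ∃ α ∈ stdSimplex ℝ ι,
      IsSaddlePointOn (stdSimplex ℝ κ) (stdSimplex ℝ ι) (fun μ α => α ⬝ᵥ M *ᵥ μ) μ α := by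
  classical
  set B : (ι → ℝ) →ₗ[ℝ] (κ → ℝ) →ₗ[ℝ] ℝ := toLinearMap₂' ℝ M
  have hpayoff : ∀ μ α, α ⬝ᵥ M *ᵥ μ = B α μ := fun μ α => (toLinearMap₂'_apply' M α μ).symm
  have hcont_left (α : ι → ℝ) : Continuous fun μ => B α μ := (B α).continuous_of_finiteDimensional
  have hcont_right (μ : κ → ℝ) : Continuous fun α => B α μ :=
    (B.flip μ).continuous_of_finiteDimensional
  simp only [hpayoff]
  obtain ⟨i⟩ := ‹Nonempty ι›
  obtain ⟨j⟩ := ‹Nonempty κ›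
  exact Sion.exists_isSaddlePointOn ⟨_, single_mem_stdSimplex ℝ j⟩ (convex_stdSimplex ℝ κ)
    (isCompact_stdSimplex ℝ κ)
    (fun α _ => (hcont_left α).lowerSemicontinuous.lowerSemicontinuousOn _)
    (fun α _ => ((B α).convexOn (convex_stdSimplex ℝ κ)).quasiconvexOn)
    (convex_stdSimplex ℝ ι) ⟨_, single_mem_stdSimplex ℝ i⟩ (isCompact_stdSimplex ℝ ι)
    (fun μ _ => (hcont_right μ).upperSemicontinuous.upperSemicontinuousOn _)
    (fun μ _ => ((B.flip μ).concaveOn (convex_stdSimplex ℝ ι)).quasiconcaveOn)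

theorem exists_stdSimplex_mulVec_neg_or_vecMul_nonneg [Nonempty κ] (M : Matrix ι κ ℝ) :
    (∃ μ ∈ stdSimplex ℝ κ, ∀ i, (M *ᵥ μ) i < 0) ∨ ∃ α ∈ stdSimplex ℝ ι, ∀ j, 0 ≤ (α ᵥ* M) j := by
  classical
  cases isEmpty_or_nonempty ι with
  | inl _ =>
    obtain ⟨j⟩ := ‹Nonempty κ›
    exact .inl ⟨_, single_mem_stdSimplex ℝ j, isEmptyElim⟩
  | inr _ =>
    obtain ⟨μ, hμ, α, hα, hsaddle⟩ := exists_isSaddlePointOn_stdSimplex M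
    rcases lt_or_ge (α ⬝ᵥ M *ᵥ μ) 0 with hneg | hnonneg
    · refine .inl ⟨μ, hμ, fun i => ?_⟩
      rw [← single_one_dotProduct i (M *ᵥ μ)]
      exact (hsaddle μ hμ _ (single_mem_stdSimplex ℝ i)).trans_lt hneg
    · refine .inr ⟨α, hα, fun j => ?_⟩
      rw [← dotProduct_single_one (α ᵥ* M) j, ← dotProduct_mulVec]
      exact hnonneg.trans (hsaddle _ (single_mem_stdSimplex ℝ j) α hα)

theorem not_exists_stdSimplex_mulVec_neg_iff [Nonempty κ] (M : Matrix ι κ ℝ) :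
    (¬ ∃ μ ∈ stdSimplex ℝ κ, ∀ i, (M *ᵥ μ) i < 0) ↔
      ∃ α ∈ stdSimplex ℝ ι, ∀ j, 0 ≤ (α ᵥ* M) j :=
  ⟨(exists_stdSimplex_mulVec_neg_or_vecMul_nonneg M).resolve_left,
    fun h hμ => not_exists_stdSimplex_mulVec_neg_and_vecMul_nonneg M ⟨hμ, h⟩⟩

end Matrix

section DecisionProblem

variable {A Ω : Type*}

def payoffGain (w : A → Ω → ℝ) (a : A) : Matrix {b // b ≠ a} Ω ℝ :=
  of fun b ω => w b ω - w a ω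

theorem payoffGain_mulVec_neg_iff [Fintype Ω] (w : A → Ω → ℝ) (a : A) (μ : Ω → ℝ)
    (b : {b // b ≠ a}) :
    (payoffGain w a *ᵥ μ) b < 0 ↔ ∑ ω, w b ω * μ ω < ∑ ω, w a ω * μ ω := by
  simp only [payoffGain, mulVec, dotProduct, of_apply, sub_mul, sum_sub_distrib, sub_neg]

theorem exists_belief_isUniqueBestResponse_iff [Fintype A] [Fintype Ω] (w : A → Ω → ℝ) (a : A) :
    (∃ μ : Ω → ℝ, (∀ ω, 0 ≤ μ ω) ∧ (∑ ω, μ ω = 1) ∧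
        ∀ b : A, b ≠ a → ∑ ω, w b ω * μ ω < ∑ ω, w a ω * μ ω) ↔
      ∃ μ ∈ stdSimplex ℝ Ω, ∀ b, (payoffGain w a *ᵥ μ) b < 0 := by
  simp only [payoffGain_mulVec_neg_iff, Subtype.forall, stdSimplex, Set.mem_ofPred_eq, and_assoc]

theorem payoffGain_vecMul_nonneg_iff [Fintype A] [DecidableEq A] (w : A → Ω → ℝ) (a : A)
    {β : {b // b ≠ a} → ℝ} (hβ : ∑ b, β b = 1) (ω : Ω) :
    0 ≤ (β ᵥ* payoffGain w a) ω ↔ w a ω ≤ ∑ b, β b * w b ω := by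
  simp only [payoffGain, vecMul, dotProduct, of_apply, mul_sub, sum_sub_distrib, ← sum_mul, hβ,
    one_mul, sub_nonneg]

theorem exists_dominating_mixedAction_iff [Fintype A] [DecidableEq A] (w : A → Ω → ℝ) (a : A) :
    (∃ α : A → ℝ, (∀ b, 0 ≤ α b) ∧ α a = 0 ∧ (∑ b, α b = 1) ∧
        ∀ ω, w a ω ≤ ∑ b, α b * w b ω) ↔
      ∃ β ∈ stdSimplex ℝ {b // b ≠ a}, ∀ ω, 0 ≤ (β ᵥ* payoffGain w a) ω := by
  have hsum (g : A → ℝ) (hg : g a = 0) : ∑ b, g b = ∑ b : {b // b ≠ a}, g b := by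
    rw [Fintype.sum_eq_add_sum_subtype_ne g a, hg, zero_add]
  constructor
  · rintro ⟨α, hα_nonneg, hαa, hα_sum, hdom⟩
    have hβ_sum : ∑ b : {b // b ≠ a}, α b = 1 := hsum α hαa ▸ hα_sum
    refine ⟨fun b => α b, ⟨fun b => hα_nonneg b, hβ_sum⟩, fun ω => ?_⟩
    rw [payoffGain_vecMul_nonneg_iff w a hβ_sum, ← hsum (fun b => α b * w b ω) (by simp [hαa])]
    exact hdom ω
  · rintro ⟨β, hβ, hdom⟩
    set α : A → ℝ := fun b => if h : b = a then 0 else β ⟨b, h⟩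
    have hαa : α a = 0 := dif_pos rfl
    have hαβ : ∀ b : {b // b ≠ a}, α b = β b := fun b => dif_neg b.2
    refine ⟨α, fun b => ?_, hαa, ?_, fun ω => ?_⟩
    · by_cases h : b = a
      · simp [α, h]
      · simpa [α, h] using hβ.1 ⟨b, h⟩
    · rw [hsum α hαa]
      simpa [hαβ] using hβ.2
    · rw [hsum (fun b => α b * w b ω) (by simp [hαa])]
      simpa [hαβ, payoffGain_vecMul_nonneg_iff w a hβ.2] using hdom ω

end DecisionProblem

theorem stmt10_general {A Ω : Type} [Fintype A] [Fintype Ω] [Nonempty Ω]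
    (w : A → Ω → ℝ) (a : A) :
    (¬ ∃ μ : Ω → ℝ, (∀ ω, 0 ≤ μ ω) ∧ (∑ ω, μ ω = 1) ∧
        ∀ b : A, b ≠ a → ∑ ω, w b ω * μ ω < ∑ ω, w a ω * μ ω) ↔
    (∃ α : A → ℝ, (∀ b, 0 ≤ α b) ∧ α a = 0 ∧ (∑ b, α b = 1) ∧
        ∀ ω, w a ω ≤ ∑ b, α b * w b ω) := by
  classical
  rw [exists_belief_isUniqueBestResponse_iff, exists_dominating_mixedAction_iff]
  exact not_exists_stdSimplex_mulVec_neg_iff _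

/-- for a single decision maker with finite actions `A` and
finite states `Ω`, an action `a` is never the unique best response to any
belief if and only if some mixed action supported outside `a` weakly
dominates `a`. -/
theorem stmt10 {A Ω : Type} [Fintype A] [DecidableEq A] [Nonempty A]
    [Fintype Ω] [Nonempty Ω]
    (w : A → Ω → ℝ) (a : A) :
    (¬ ∃ μ : Ω → ℝ, (∀ ω, 0 ≤ μ ω) ∧ (∑ ω, μ ω = 1) ∧
        ∀ b : A, b ≠ a → ∑ ω, w b ω * μ ω < ∑ ω, w a ω * μ ω) ↔
    (∃ α : A → ℝ, (∀ b, 0 ≤ α b) ∧ α a = 0 ∧ (∑ b, α b = 1) ∧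
        ∀ ω, w a ω ≤ ∑ b, α b * w b ω) :=
  stmt10_general w a
end

section
/- Fix a finite set of outcomes {q^1,…,q^L} and an outcome p in their convex hull with strictly positive weights, and a product partition 𝒜 of A. If each q^l is (𝒜,p)-decomposable and 𝒜-measurable, then for all states θ, indices l, players i, cells B_i ∈ 𝒜_i, and actions a_i ∈ B_i: p(a_i)·ᾱ^l_{θ,i}(B_i)/Σ_{b_i∈B_i} p(b_i) = q^l(a_i)·ᾱ^l_{θ,i}(B_i)/Σ_{b_i∈B_i} q^l(b_i), under the convention 0/0 = 0, where ᾱ^l_{θ,i}(B_i) = Σ_{a_i∈B_i} α^l_{θ,i}(a_i) and α^l_{θ,i} is the conditional action distribution of player i in q^l given θ. -/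
open Finset

variable {I : Type} [Fintype I] [DecidableEq I]
  {A : I → Type} [∀ i, Fintype (A i)] [∀ i, DecidableEq (A i)]
  {Θ : Type} [Fintype Θ]

/-- if `p` is a strictly positive convex combination of
complete-information Nash equilibrium outcomes `q^l` that are `𝒜`-measurable
and `(𝒜,p)`-decomposable (the partition `𝒜` is encoded by its cell map `C`),
then the two "canonical action plan" ratios agree:
`p(a_i)·ᾱ^l_{θ,i}(B_i)/Σ_{b_i∈B_i} p(b_i) = q^l(a_i)·ᾱ^l_{θ,i}(B_i)/Σ_{b_i∈B_i} q^l(b_i)`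
(with the Lean convention `·/0 = 0` implementing `0/0 = 0`). -/
theorem stmt17 {I : Type} [Fintype I] [DecidableEq I]
    {A : I → Type} [∀ i, Fintype (A i)] [∀ i, DecidableEq (A i)]
    {Θ : Type} [Fintype Θ]
    (π : Θ → ℝ) (hπpos : ∀ θ, 0 < π θ) (hπ1 : ∑ θ, π θ = 1)
    (L : ℕ) (hL : 0 < L)
    (α : Fin L → Θ → ∀ i : I, A i → ℝ)
    (hα0 : ∀ l θ i ai, 0 ≤ α l θ i ai) (hα1 : ∀ l θ i, ∑ ai, α l θ i ai = 1)
    (q : Fin L → ((∀ j, A j) × Θ) → ℝ)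
    (hq : ∀ l (a : ∀ j, A j) (θ : Θ), q l (a, θ) = π θ * ∏ i, α l θ i (a i))
    (s : Fin L → ℝ) (hs : ∀ l, 0 < s l) (hs1 : ∑ l, s l = 1)
    (p : ((∀ j, A j) × Θ) → ℝ) (hp : ∀ y, p y = ∑ l, s l * q l y)
    (C : ∀ i : I, A i → Finset (A i))
    (hCmem : ∀ i ai, ai ∈ C i ai)
    (hCpart : ∀ i (ai bi : A i), bi ∈ C i ai → C i bi = C i ai)
    (hmeas : ∀ l i (ai bi : A i), bi ∈ C i ai →
      0 < marg (q l) i ai → 0 < marg (q l) i bi →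
      condBelief (q l) i ai = condBelief (q l) i bi)
    (hdec : ∀ l i (ai bi : A i), bi ∈ C i ai →
      marg (q l) i ai * marg p i bi = marg p i ai * marg (q l) i bi) :
    ∀ (l : Fin L) (θ : Θ) (i : I) (ai : A i),
      marg p i ai * (∑ bi ∈ C i ai, α l θ i bi) / (∑ bi ∈ C i ai, marg p i bi)
        = marg (q l) i ai * (∑ bi ∈ C i ai, α l θ i bi)
            / (∑ bi ∈ C i ai, marg (q l) i bi) := by
  -- explicit formula for the marginal of q l
  have key : ∀ (l : Fin L) (i : I) (ai : A i),
      marg (q l) i ai = ∑ θ, π θ * α l θ i ai := by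
    intro l i ai
    unfold marg
    rw [Fintype.sum_prod_type, Finset.sum_comm]
    refine Finset.sum_congr rfl fun θ _ => ?_
    set g : ∀ j, A j → ℝ :=
      Function.update (fun j => α l θ j) i (fun x => if x = ai then α l θ i ai else 0)
      with hg
    have hpt : ∀ a : ∀ j, A j,
        (if a i = ai then q l (a, θ) else 0) = π θ * ∏ j, g j (a j) := by
      intro a
      have hsplit : (∏ j, g j (a j))
          = g i (a i) * ∏ j ∈ (univ.erase i), g j (a j) := by
        rw [Finset.mul_prod_erase univ (fun j => g j (a j)) (mem_univ i)]
      have hgi : g i (a i) = if a i = ai then α l θ i (a i) else 0 := by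
        simp only [hg, Function.update_self]
        by_cases h : a i = ai <;> simp [h]
      have hgj : ∀ j ∈ univ.erase i, g j (a j) = α l θ j (a j) := by
        intro j hj
        have hne : j ≠ i := (Finset.mem_erase.mp hj).1
        simp [hg, Function.update_of_ne hne]
      rw [hsplit, Finset.prod_congr rfl hgj, hgi, hq]
      by_cases h : a i = ai
      · simp only [if_pos h]
        rw [← Finset.mul_prod_erase univ (fun j => α l θ j (a j)) (mem_univ i)]
      · simp [h]
    calc (∑ a : ∀ j, A j, if a i = ai then q l (a, θ) else 0)
        = ∑ a : ∀ j, A j, π θ * ∏ j, g j (a j) := Finset.sum_congr rfl fun a _ => hpt a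
      _ = π θ * ∑ a : ∀ j, A j, ∏ j, g j (a j) := by rw [Finset.mul_sum]
      _ = π θ * ∏ j, ∑ x : A j, g j x := by
          rw [Finset.prod_univ_sum]
          congr 1
      _ = π θ * α l θ i ai := by
          congr 1
          have h1 : ∀ j ∈ (univ : Finset I), j ≠ i → (∑ x : A j, g j x) = 1 := by
            intro j _ hne
            simp [hg, Function.update_of_ne hne, hα1]
          have h2 : (∑ x : A i, g i x) = α l θ i ai := by
            simp [hg]
          rw [Finset.prod_eq_single i h1 (fun h => absurd (mem_univ i) h), h2]
  have margq_nonneg : ∀ (l : Fin L) (i : I) (bi : A i), 0 ≤ marg (q l) i bi := by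
    intro l i bi
    rw [key]
    exact Finset.sum_nonneg fun θ _ => mul_nonneg (hπpos θ).le (hα0 l θ i bi)
  have margp_eq : ∀ (i : I) (bi : A i),
      marg p i bi = ∑ l, s l * marg (q l) i bi := by
    intro i bi
    unfold marg
    simp only [Finset.mul_sum]
    conv_rhs => rw [Finset.sum_comm]
    refine Finset.sum_congr rfl fun x _ => ?_
    by_cases h : x.1 i = bi
    · simp [h, hp x]
    · simp [h]
  intro l θ i ai
  set S := ∑ bi ∈ C i ai, α l θ i bi with hS
  set Mq := ∑ bi ∈ C i ai, marg (q l) i bi with hMq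
  set Mp := ∑ bi ∈ C i ai, marg p i bi with hMp
  by_cases hMq0 : Mq = 0
  · -- all q-marginals in the cell vanish, hence all α vanish, so S = 0
    have hall : ∀ bi ∈ C i ai, marg (q l) i bi = 0 := by
      intro bi hbi
      have := (Finset.sum_eq_zero_iff_of_nonneg
        (fun bi _ => margq_nonneg l i bi)).mp hMq0
      exact this bi hbi
    have hS0 : S = 0 := by
      refine Finset.sum_eq_zero fun bi hbi => ?_
      have h0 : (∑ θ', π θ' * α l θ' i bi) = 0 := by rw [← key]; exact hall bi hbi
      have := (Finset.sum_eq_zero_iff_of_nonneg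
        (fun θ' _ => mul_nonneg (hπpos θ').le (hα0 l θ' i bi))).mp h0 θ (mem_univ θ)
      have hpθ := (hπpos θ).ne'
      rcases mul_eq_zero.mp this with h | h
      · exact absurd h hpθ
      · exact h
    rw [hS0]
    simp
  · have hMqpos : 0 < Mq :=
      lt_of_le_of_ne (Finset.sum_nonneg fun bi _ => margq_nonneg l i bi) (Ne.symm hMq0)
    have hMppos : 0 < Mp := by
      have hle : s l * Mq ≤ Mp := by
        rw [hMp, hMq, Finset.mul_sum]
        refine Finset.sum_le_sum fun bi _ => ?_
        rw [margp_eq]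
        exact Finset.single_le_sum
          (fun l' _ => mul_nonneg (hs l').le (margq_nonneg l' i bi)) (mem_univ l)
      exact lt_of_lt_of_le (mul_pos (hs l) hMqpos) hle
    have cross : marg (q l) i ai * Mp = marg p i ai * Mq := by
      rw [hMp, hMq, Finset.mul_sum, Finset.mul_sum]
      exact Finset.sum_congr rfl fun bi hbi => hdec l i ai bi hbi
    rw [div_eq_div_iff hMppos.ne' hMqpos.ne']
    linear_combination -S * cross
end

section
/- Let q be a complete-information Nash equilibrium outcome that is 𝒜-measurable for a product partition 𝒜. Then for all θ ∈ Θ, i ∈ I, B_i ∈ 𝒜_i, and a_i ∈ B_i: q(a_i)·ᾱ_{θ,i}(B_i) / Σ_{b_i ∈ B_i} q(b_i) = α_{θ,i}(a_i), under the convention 0/0 = 0, where α_{θ,i} is the conditional distribution of i's action given θ under q and ᾱ_{θ,i}(B_i) = Σ_{a_i ∈ B_i} α_{θ,i}(a_i). -/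
open Finset

variable {I : Type} [Fintype I] [DecidableEq I]
  {A : I → Type} [∀ i, Fintype (A i)] [∀ i, DecidableEq (A i)]
  {Θ : Type} [Fintype Θ]

/-- if `q` is a complete-information Nash equilibrium outcome
(`q(a,θ) = π(θ)∏_i α_{θ,i}(a_i)` with each `α_θ` a Nash equilibrium of the
complete-information game at `θ`) which is `𝒜`-measurable for a product
partition `𝒜` (encoded by its cell map `C`), then
`q(a_i)·ᾱ_{θ,i}(B_i)/Σ_{b_i∈B_i} q(b_i) = α_{θ,i}(a_i)` (with the Lean
convention `·/0 = 0` implementing `0/0 = 0`). -/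
theorem stmt18 {I : Type} [Fintype I] [DecidableEq I]
    {A : I → Type} [∀ i, Fintype (A i)] [∀ i, DecidableEq (A i)]
    {Θ : Type} [Fintype Θ]
    (π : Θ → ℝ) (hπpos : ∀ θ, 0 < π θ) (hπ1 : ∑ θ, π θ = 1)
    (u : ∀ i : I, ((∀ j, A j) × Θ) → ℝ)
    (α : Θ → ∀ i : I, A i → ℝ)
    (hα0 : ∀ θ i ai, 0 ≤ α θ i ai) (hα1 : ∀ θ i, ∑ ai, α θ i ai = 1)
    (hnash : ∀ (θ : Θ) (i : I) (ci : A i),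
      (∑ a : ∀ j, A j, u i (Function.update a i ci, θ) * ∏ j, α θ j (a j))
        ≤ ∑ a : ∀ j, A j, u i (a, θ) * ∏ j, α θ j (a j))
    (q : ((∀ j, A j) × Θ) → ℝ)
    (hq : ∀ (a : ∀ j, A j) (θ : Θ), q (a, θ) = π θ * ∏ i, α θ i (a i))
    (C : ∀ i : I, A i → Finset (A i))
    (hCmem : ∀ i ai, ai ∈ C i ai)
    (hCpart : ∀ i (ai bi : A i), bi ∈ C i ai → C i bi = C i ai)
    (hmeas : ∀ i (ai bi : A i), bi ∈ C i ai →
      0 < marg q i ai → 0 < marg q i bi →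
      condBelief q i ai = condBelief q i bi) :
    ∀ (θ : Θ) (i : I) (ai : A i),
      marg q i ai * (∑ bi ∈ C i ai, α θ i bi) / (∑ bi ∈ C i ai, marg q i bi)
        = α θ i ai := by
  intro θ i ai
  -- choose a profile at which every coordinate has positive probability
  have hex : ∀ j : I, ∃ aj : A j, 0 < α θ j aj := by
    intro j
    by_contra h
    push_neg at h
    have h0 : ∑ aj, α θ j aj = 0 :=
      Finset.sum_eq_zero fun aj _ => le_antisymm (h aj) (hα0 θ j aj)
    rw [hα1] at h0
    norm_num at h0
  choose astar hastar using hex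
  set P : ℝ := ∏ j ∈ Finset.univ.erase i, α θ j (astar j) with hPdef
  have hP : 0 < P := Finset.prod_pos fun j _ => hastar j
  have hq0 : ∀ x : ((∀ j, A j) × Θ), 0 ≤ q x := by
    rintro ⟨a, θ'⟩
    rw [hq]
    exact mul_nonneg (hπpos θ').le (Finset.prod_nonneg fun j _ => hα0 θ' j (a j))
  have hmarg0 : ∀ bi : A i, 0 ≤ marg q i bi := by
    intro bi
    refine Finset.sum_nonneg fun x _ => ?_
    split
    · exact hq0 x
    · exact le_refl 0
  have hprod : ∀ (θ' : Θ) (a : ∀ j, A j) (c : A i),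
      (∏ j, α θ' j (Function.update a i c j))
        = α θ' i c * ∏ j ∈ Finset.univ.erase i, α θ' j (a j) := by
    intro θ' a c
    rw [← Finset.mul_prod_erase Finset.univ (fun j => α θ' j (Function.update a i c j))
      (Finset.mem_univ i), Function.update_self]
    congr 1
    refine Finset.prod_congr rfl fun j hj => ?_
    rw [Function.update_of_ne (Finset.ne_of_mem_erase hj)]
  have hzero : ∀ bi : A i, marg q i bi = 0 → α θ i bi = 0 := by
    intro bi h0
    have hterm : (if (Function.update astar i bi) i = bi
        then q (Function.update astar i bi, θ) else 0) = 0 := by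
      refine (Finset.sum_eq_zero_iff_of_nonneg fun x _ => ?_).mp h0
        (Function.update astar i bi, θ) (Finset.mem_univ _)
      split
      · exact hq0 x
      · exact le_refl 0
    rw [if_pos (Function.update_self i bi astar)] at hterm
    rw [hq, hprod θ astar bi] at hterm
    have := mul_eq_zero.mp hterm
    rcases this with h | h
    · exact absurd h (hπpos θ).ne'
    · rcases mul_eq_zero.mp h with h | h
      · exact h
      · exact absurd h hP.ne'
  have hratio : ∀ bi ∈ C i ai, 0 < marg q i ai → 0 < marg q i bi →
      α θ i ai * marg q i bi = α θ i bi * marg q i ai := by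
    intro bi hbi hma hmb
    have e := congrFun (hmeas i ai bi hbi hma hmb) (astar, θ)
    simp only [condBelief] at e
    rw [hq, hq, hprod θ astar ai, hprod θ astar bi,
      div_eq_div_iff hma.ne' hmb.ne'] at e
    have e2 : (π θ * P) * (α θ i ai * marg q i bi)
        = (π θ * P) * (α θ i bi * marg q i ai) := by ring_nf; ring_nf at e; linarith
    exact mul_left_cancel₀ (mul_pos (hπpos θ) hP).ne' e2
  by_cases hma : marg q i ai = 0
  · rw [hma, zero_mul, zero_div]
    exact (hzero ai hma).symm
  · have hma' : 0 < marg q i ai := lt_of_le_of_ne (hmarg0 ai) (Ne.symm hma)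
    have hD : 0 < ∑ bi ∈ C i ai, marg q i bi :=
      lt_of_lt_of_le hma' (Finset.single_le_sum (fun b _ => hmarg0 b) (hCmem i ai))
    have hsum : α θ i ai * ∑ bi ∈ C i ai, marg q i bi
        = (∑ bi ∈ C i ai, α θ i bi) * marg q i ai := by
      rw [Finset.mul_sum, Finset.sum_mul]
      refine Finset.sum_congr rfl fun bi hbi => ?_
      by_cases hmb : marg q i bi = 0
      · rw [hmb, hzero bi hmb, mul_zero, zero_mul]
      · exact hratio bi hbi hma' (lt_of_le_of_ne (hmarg0 bi) (Ne.symm hmb))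
    rw [div_eq_iff hD.ne']
    linear_combination -hsum
end
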